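/- arXiv:1507.07119 — 4 statements merged into one kernel-verified Lean document; each statement's English description precedes it below -/
import Mathlib

section
/- Let θ = (θ₁,…,θₙ) ∈ ℝⁿ be such that 1, θ₁, …, θₙ are linearly independent over ℤ, and let m, m′ be best approximations to θ (with respect to the weights j₁,…,jₙ) with M_m < M_{m′} such that no best approximation m″ to θ satisfies M_m < M_{m″} < M_{m′}. Then ‖m·θ‖ · M_{m′} ≤ 1. -/
open scoped BigOperators

/-- Distance from a real number to the nearest integer. -/
noncomputable def nearInt (x : ℝ) : ℝ := |x - round x|

/-- The height `M_m = max_i |m_i|^(1/j_i)` of an integer vector. -/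
noncomputable def height (n : ℕ) (j : Fin n → ℝ) (m : Fin n → ℤ) : ℝ :=
  ⨆ i, (|m i| : ℝ) ^ (1 / j i)

/-- `m ∈ ℤⁿ \ {0}` is a best approximation to `θ` with respect to the weights `j`. -/
def IsBestApprox (n : ℕ) (j θ : Fin n → ℝ) (m : Fin n → ℤ) : Prop :=
  m ≠ 0 ∧ ∀ v : Fin n → ℤ, v ≠ 0 → v ≠ m → v ≠ -m →
    height n j v ≤ height n j m →
    nearInt (∑ i, (m i : ℝ) * θ i) < nearInt (∑ i, (v i : ℝ) * θ i)

/-- `1, θ₁, …, θₙ` are linearly independent over `ℤ`. -/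
def ZLinIndep (n : ℕ) (θ : Fin n → ℝ) : Prop :=
  ∀ (a₀ : ℤ) (a : Fin n → ℤ), (a₀ : ℝ) + ∑ i, (a i : ℝ) * θ i = 0 → a₀ = 0 ∧ a = 0

/-!
Suppose `‖m·θ‖ M_{m'} > 1` and pick `Q` with `1 / ‖m·θ‖ < Q < M_{m'}` (so `Q > 2`, as `‖·‖ ≤ 1/2`).
Minkowski's linear forms theorem applied to the shear `y ↦ (y₀ + θ·y', y')` of determinant one
gives Dirichlet's bound: some `v ≠ 0` has `|v_i| ≤ Q^{j_i}` and `‖v·θ‖ ≤ 1/Q < ‖m·θ‖`, hence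
`M_v ≤ Q < M_{m'}`. A minimiser `w` of `‖w·θ‖` over the finitely many nonzero `w` with `M_w ≤ M_v`
is a best approximation, so by the gap hypothesis `M_w ≤ M_m`, and then
`‖m·θ‖ ≤ ‖w·θ‖ ≤ ‖v·θ‖`, a contradiction.
-/

open MeasureTheory Matrix

lemma nearInt_le_abs_sub (x : ℝ) (k : ℤ) : nearInt x ≤ |x - k| := round_le x k

lemma nearInt_le_half (x : ℝ) : nearInt x ≤ 1 / 2 := abs_sub_round x

lemma nearInt_neg (x : ℝ) : nearInt (-x) = nearInt x := by
  have h₁ := nearInt_le_abs_sub (-x) (-round x)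
  have h₂ := nearInt_le_abs_sub x (-round (-x))
  push_cast at h₁ h₂
  rw [neg_sub_neg, abs_sub_comm] at h₁
  rw [sub_neg_eq_add, ← abs_neg, neg_add'] at h₂
  exact le_antisymm h₁ h₂

lemma nearInt_sum_neg {n : ℕ} (θ : Fin n → ℝ) (m : Fin n → ℤ) :
    nearInt (∑ i, ((-m) i : ℝ) * θ i) = nearInt (∑ i, (m i : ℝ) * θ i) := by
  simp [neg_mul, Finset.sum_neg_distrib, nearInt_neg]

lemma ZLinIndep.eq_or_eq_neg_of_nearInt_eq {n : ℕ} {θ : Fin n → ℝ} (hθ : ZLinIndep n θ)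
    {u w : Fin n → ℤ}
    (h : nearInt (∑ i, (u i : ℝ) * θ i) = nearInt (∑ i, (w i : ℝ) * θ i)) :
    u = w ∨ u = -w := by
  rcases abs_eq_abs.mp h with h | h
  · refine .inl (sub_eq_zero.mp (hθ (round (∑ i, (w i : ℝ) * θ i) -
      round (∑ i, (u i : ℝ) * θ i)) (u - w) ?_).2)
    simp only [Pi.sub_apply, Int.cast_sub, sub_mul, Finset.sum_sub_distrib]
    linarith
  · refine .inr (eq_neg_of_add_eq_zero_left (hθ (-round (∑ i, (u i : ℝ) * θ i) -
      round (∑ i, (w i : ℝ) * θ i)) (u + w) ?_).2)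
    simp only [Pi.add_apply, Int.cast_add, Int.cast_sub, Int.cast_neg, add_mul,
      Finset.sum_add_distrib]
    linarith

section Height

variable {n : ℕ} {j : Fin n → ℝ}

lemma height_nonneg (m : Fin n → ℤ) : 0 ≤ height n j m :=
  Real.iSup_nonneg fun _ => Real.rpow_nonneg (abs_nonneg _) _

lemma height_le_iff (hj : ∀ i, 0 < j i) {m : Fin n → ℤ} {Q : ℝ} (hQ : 0 ≤ Q) :
    height n j m ≤ Q ↔ ∀ i, |(m i : ℝ)| ≤ Q ^ j i := by
  have key : ∀ i, (|m i| : ℝ) ^ (1 / j i) ≤ Q ↔ |(m i : ℝ)| ≤ Q ^ j i := fun i => by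
    rw [one_div, Real.rpow_inv_le_iff_of_pos (abs_nonneg _) hQ (hj i)]
  refine ⟨fun h i => (key i).1 ?_, fun h => Real.iSup_le (fun i => (key i).2 (h i)) hQ⟩
  exact (le_ciSup (Set.finite_range _).bddAbove i).trans h

lemma finite_setOf_height_le (hj : ∀ i, 0 < j i) (H : ℝ) :
    {m : Fin n → ℤ | height n j m ≤ H}.Finite := by
  rcases lt_or_ge H 0 with hH | hH
  · exact Set.finite_empty.subset fun m hm => (hH.not_ge ((height_nonneg m).trans hm)).elim
  let B : Fin n → ℤ := fun i => ⌊H ^ j i⌋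
  refine (Set.finite_Icc (-B) B).subset fun m hm => ?_
  have hmB (i : Fin n) : |m i| ≤ B i :=
    Int.le_floor.2 (by exact_mod_cast (height_le_iff hj hH).1 hm i)
  exact ⟨fun i => neg_le_of_abs_le (hmB i), fun i => le_of_abs_le (hmB i)⟩

end Height

section BestApprox

variable {n : ℕ} {j θ : Fin n → ℝ}

lemma IsBestApprox.nearInt_le {m : Fin n → ℤ} (hm : IsBestApprox n j θ m) {w : Fin n → ℤ}
    (hw : w ≠ 0) (hwm : height n j w ≤ height n j m) :
    nearInt (∑ i, (m i : ℝ) * θ i) ≤ nearInt (∑ i, (w i : ℝ) * θ i) := by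
  rcases eq_or_ne w m with rfl | hw₁
  · exact le_rfl
  rcases eq_or_ne w (-m) with rfl | hw₂
  · exact (nearInt_sum_neg θ m).ge
  exact (hm.2 w hw hw₁ hw₂ hwm).le

/-- A minimiser of `‖w·θ‖` is a best approximation: independence of `1, θ` makes it unique up to
sign. -/
lemma exists_isBestApprox_le (hj : ∀ i, 0 < j i) (hθ : ZLinIndep n θ) {v : Fin n → ℤ}
    (hv : v ≠ 0) :
    ∃ w, IsBestApprox n j θ w ∧ height n j w ≤ height n j v ∧
      nearInt (∑ i, (w i : ℝ) * θ i) ≤ nearInt (∑ i, (v i : ℝ) * θ i) := by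
  let S := {w : Fin n → ℤ | w ≠ 0 ∧ height n j w ≤ height n j v}
  have hS : S.Finite := (finite_setOf_height_le hj _).subset fun _ hw => hw.2
  obtain ⟨w, ⟨hw, hwv⟩, hmin⟩ :=
    S.exists_min_image (fun w => nearInt (∑ i, (w i : ℝ) * θ i)) hS ⟨v, hv, le_rfl⟩
  refine ⟨w, ⟨hw, fun u hu huw huw' hle => ?_⟩, hwv, hmin v ⟨hv, le_rfl⟩⟩
  refine (hmin u ⟨hu, hle.trans hwv⟩).lt_of_ne fun h => ?_
  rcases hθ.eq_or_eq_neg_of_nearInt_eq h with rfl | rfl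
  · exact huw rfl
  · exact huw' (neg_neg u).symm

end BestApprox

/-- Minkowski's theorem on linear forms. -/
theorem exists_int_ne_zero_forall_abs_apply_le {ι : Type*} [Fintype ι] [Nonempty ι]
    (f : (ι → ℝ) →ₗ[ℝ] (ι → ℝ)) (hf : LinearMap.det f ≠ 0) (c : ι → ℝ) (hc : ∀ k, 0 ≤ c k)
    (hdet : |LinearMap.det f| ≤ ∏ k, c k) :
    ∃ a : ι → ℤ, a ≠ 0 ∧ ∀ k, |f (fun l => (a l : ℝ)) k| ≤ c k := by
  let box : Set (ι → ℝ) := Set.univ.pi fun k => Set.Icc (-c k) (c k)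
  have hmem {x : ι → ℝ} : x ∈ f ⁻¹' box ↔ ∀ k, |f x k| ≤ c k := by
    simp only [box, Set.mem_preimage, Set.mem_univ_pi, Set.mem_Icc, abs_le]
  have hsymm : ∀ x ∈ f ⁻¹' box, -x ∈ f ⁻¹' box := fun x hx => by
    simpa [hmem] using hx
  have hconv : Convex ℝ (f ⁻¹' box) :=
    (convex_pi fun k _ => convex_Icc _ _).linear_preimage f
  have hcpt : IsCompact (f ⁻¹' box) :=
    (f.equivOfDetNeZero hf).toContinuousLinearEquiv.toHomeomorph.isCompact_preimage.2
      (isCompact_univ_pi fun k => isCompact_Icc)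
  have hvol : volume (ZSpan.fundamentalDomain (Pi.basisFun ℝ ι)) * 2 ^ Module.finrank ℝ (ι → ℝ)
      ≤ volume (f ⁻¹' box) := by
    rw [Measure.addHaar_preimage_linearMap volume hf, ZSpan.fundamentalDomain_pi_basisFun,
      volume_pi_pi, volume_pi_pi]
    have key : (2 : ℝ) ^ Fintype.card ι ≤ |(LinearMap.det f)⁻¹| * ∏ k, (c k - -c k) := by
      simp_rw [abs_inv, sub_neg_eq_add, ← two_mul, Finset.prod_mul_distrib, Finset.prod_const,
        Finset.card_univ, inv_mul_eq_div, le_div_iff₀ (abs_pos.2 hf)]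
      gcongr
    simp only [Real.volume_Ico, Real.volume_Icc, sub_zero, ENNReal.ofReal_one,
      Finset.prod_const_one, one_mul, Module.finrank_fintype_fun_eq_card]
    rw [← ENNReal.ofReal_prod_of_nonneg fun k _ => by linarith [hc k], ← ENNReal.ofReal_mul
      (abs_nonneg _), ← ENNReal.ofReal_ofNat, ← ENNReal.ofReal_pow zero_le_two]
    exact ENNReal.ofReal_le_ofReal key
  have : Countable (Submodule.span ℤ (Set.range (Pi.basisFun ℝ ι))).toAddSubgroup :=
    inferInstanceAs (Countable (Submodule.span ℤ (Set.range (Pi.basisFun ℝ ι))))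
  obtain ⟨x, hx0, hx⟩ := exists_ne_zero_mem_lattice_of_measure_mul_two_pow_le_measure
    (ZSpan.isAddFundamentalDomain' (Pi.basisFun ℝ ι) volume) hsymm hconv hcpt hvol
  obtain ⟨a, ha⟩ := (Submodule.mem_span_range_iff_exists_fun ℤ).mp x.2
  have hxa : (fun l => (a l : ℝ)) = x := by
    classical
    rw [← ha]; ext; simp [Pi.single_apply]
  refine ⟨a, fun h => hx0 (Subtype.ext ?_), hmem.1 (hxa ▸ hx)⟩
  rw [← hxa, h]
  ext; simp

section Dirichlet

variable {n : ℕ} (θ : Fin n → ℝ)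

def shearMatrix : Matrix (Fin (n + 1)) (Fin (n + 1)) ℝ :=
  1 + vecMulVec (Pi.single 0 1) (Fin.cons 0 θ)

lemma det_shearMatrix : (shearMatrix θ).det = 1 := by
  rw [shearMatrix, vecMulVec_eq Unit, det_one_add_replicateCol_mul_replicateRow]
  simp

lemma shearMatrix_mulVec_zero (y : Fin (n + 1) → ℝ) :
    (shearMatrix θ *ᵥ y) 0 = y 0 + ∑ i, θ i * y i.succ := by
  simp [shearMatrix, add_mulVec, vecMulVec_mulVec, dotProduct, Fin.sum_univ_succ]

lemma shearMatrix_mulVec_succ (y : Fin (n + 1) → ℝ) (i : Fin n) :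
    (shearMatrix θ *ᵥ y) i.succ = y i.succ := by
  simp [shearMatrix, add_mulVec, vecMulVec_mulVec]

theorem exists_nearInt_le_inv (j : Fin n → ℝ) (hsum : 1 ≤ ∑ i, j i) {Q : ℝ} (hQ : 1 < Q) :
    ∃ v : Fin n → ℤ, v ≠ 0 ∧ (∀ i, |(v i : ℝ)| ≤ Q ^ j i) ∧
      nearInt (∑ i, (v i : ℝ) * θ i) ≤ 1 / Q := by
  have hQ₀ : 0 < Q := zero_lt_one.trans hQ
  let c : Fin (n + 1) → ℝ := Fin.cons (1 / Q) fun i => Q ^ j i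
  have hc : ∀ k, 0 ≤ c k :=
    Fin.cases (one_div_nonneg.2 hQ₀.le) fun i => (Real.rpow_pos_of_pos hQ₀ _).le
  have hprod : 1 ≤ ∏ k, c k := by
    rw [Fin.prod_univ_succ]
    simp only [c, Fin.cons_zero, Fin.cons_succ]
    rw [← Real.rpow_sum_of_pos hQ₀, one_div, ← div_eq_inv_mul, one_le_div hQ₀]
    simpa using Real.rpow_le_rpow_of_exponent_le hQ.le hsum
  obtain ⟨a, ha₀, ha⟩ := exists_int_ne_zero_forall_abs_apply_le (toLin' (shearMatrix θ))
    (by simp [det_shearMatrix]) c hc (by simpa [det_shearMatrix] using hprod)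
  have hfirst : |(a 0 : ℝ) + ∑ i, θ i * a i.succ| ≤ 1 / Q := by
    simpa [c, shearMatrix_mulVec_zero] using ha 0
  have hrest (i : Fin n) : |(a i.succ : ℝ)| ≤ Q ^ j i := by
    simpa [c, shearMatrix_mulVec_succ] using ha i.succ
  refine ⟨fun i => a i.succ, fun hv => ha₀ ?_, hrest, ?_⟩
  · have hsucc (i : Fin n) : a i.succ = 0 := congrFun hv i
    have h0 : |(a 0 : ℝ)| < 1 := by
      simpa [hsucc] using hfirst.trans_lt ((div_lt_one hQ₀).2 hQ)
    ext k
    exact Fin.cases (Int.abs_lt_one_iff.1 (by exact_mod_cast h0)) hsucc k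
  · calc nearInt (∑ i, (a i.succ : ℝ) * θ i)
        ≤ |∑ i, (a i.succ : ℝ) * θ i - (-a 0 : ℤ)| := nearInt_le_abs_sub _ _
      _ = |(a 0 : ℝ) + ∑ i, θ i * a i.succ| := by
        rw [Int.cast_neg, sub_neg_eq_add, add_comm]
        simp_rw [mul_comm]
      _ ≤ 1 / Q := hfirst

end Dirichlet

theorem statement6_general (n : ℕ) (θ j : Fin n → ℝ)
    (hj : ∀ i, 0 < j i) (hsum : ∑ i, j i = 1) (hθ : ZLinIndep n θ)
    (m m' : Fin n → ℤ) (hm : IsBestApprox n j θ m)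
    (hgap : ¬ ∃ m'' : Fin n → ℤ, IsBestApprox n j θ m'' ∧
      height n j m < height n j m'' ∧ height n j m'' < height n j m') :
    nearInt (∑ i, (m i : ℝ) * θ i) * height n j m' ≤ 1 := by
  set δ := nearInt (∑ i, (m i : ℝ) * θ i)
  by_contra! hδ
  have hδ₀ : 0 < δ := pos_of_mul_pos_left (zero_lt_one.trans hδ) (height_nonneg m')
  obtain ⟨Q, hδQ, hQ⟩ := exists_between ((div_lt_iff₀' hδ₀).2 hδ)
  have hQ₁ : 1 < Q := calc
    1 < 1 / δ := (one_lt_div hδ₀).2 ((nearInt_le_half _).trans_lt (by norm_num))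
    _ < Q := hδQ
  obtain ⟨v, hv, hvQ, hvθ⟩ := exists_nearInt_le_inv θ j hsum.ge hQ₁
  have hvm' : height n j v < height n j m' :=
    ((height_le_iff hj (zero_le_one.trans hQ₁.le)).2 hvQ).trans_lt hQ
  obtain ⟨w, hw, hwv, hwθ⟩ := exists_isBestApprox_le hj hθ hv
  have hδw : δ ≤ nearInt (∑ i, (w i : ℝ) * θ i) := by
    rcases le_or_gt (height n j w) (height n j m) with hwm | hmw
    · exact hm.nearInt_le hw.1 hwm
    · exact (hgap ⟨w, hw, hmw, hwv.trans_lt hvm'⟩).elim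
  have hQδ : 1 / Q < δ := (div_lt_comm₀ hδ₀ (zero_lt_one.trans hQ₁)).1 hδQ
  exact (hδw.trans (hwθ.trans hvθ)).not_gt hQδ

theorem statement6 (n : ℕ) (hn : 1 ≤ n) (θ j : Fin n → ℝ)
    (hj : ∀ i, 0 < j i) (hsum : ∑ i, j i = 1) (hθ : ZLinIndep n θ)
    (m m' : Fin n → ℤ) (hm : IsBestApprox n j θ m) (hm' : IsBestApprox n j θ m')
    (hlt : height n j m < height n j m')
    (hgap : ¬ ∃ m'' : Fin n → ℤ, IsBestApprox n j θ m'' ∧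
      height n j m < height n j m'' ∧ height n j m'' < height n j m') :
    nearInt (∑ i, (m i : ℝ) * θ i) * height n j m' ≤ 1 :=
  statement6_general n θ j hj hsum hθ m m' hm hgap
end

section
/- Let θ = (θ₁,…,θₙ) ∈ ℝⁿ be such that 1, θ₁, …, θₙ are linearly independent over ℤ. Then for every real R > 1 and every T > 0, the set {m ∈ ℤⁿ : m is a best approximation to θ with respect to the weights j₁,…,jₙ and T ≤ M_m < R·T} has at most 4·3ⁿ·(1 + log₂ R) elements. -/
open scoped BigOperators

namespace Stmt13Aux

lemma height_term_le {n : ℕ} [Nonempty (Fin n)] (j : Fin n → ℝ) (m : Fin n → ℤ) (i : Fin n) :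
    (|m i| : ℝ) ^ (1 / j i) ≤ height n j m := by
  unfold height
  exact le_ciSup (f := fun i => (|(m i : ℝ)|) ^ (1 / j i)) (Set.finite_range _).bddAbove i

lemma height_le {n : ℕ} [Nonempty (Fin n)] (j : Fin n → ℝ) (m : Fin n → ℤ) (C : ℝ)
    (h : ∀ i, (|m i| : ℝ) ^ (1 / j i) ≤ C) : height n j m ≤ C :=
  ciSup_le h

lemma abs_lt_of_height_lt {n : ℕ} [Nonempty (Fin n)] {j : Fin n → ℝ} (hj : ∀ i, 0 < j i)
    {m : Fin n → ℤ} {C : ℝ} (hC : 0 < C) (h : height n j m < C) (i : Fin n) :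
    (|m i| : ℝ) < C ^ (j i) := by
  have h1 : (|m i| : ℝ) ^ (1 / j i) < C := lt_of_le_of_lt (height_term_le j m i) h
  have h2 : ((|m i| : ℝ) ^ (1 / j i)) ^ (j i) < C ^ (j i) :=
    Real.rpow_lt_rpow (Real.rpow_nonneg (by positivity) _) h1 (hj i)
  rwa [← Real.rpow_mul (by positivity), one_div_mul_cancel (hj i).ne', Real.rpow_one] at h2

lemma height_le_of_abs_le {n : ℕ} [Nonempty (Fin n)] {j : Fin n → ℝ} (hj : ∀ i, 0 < j i)
    {m : Fin n → ℤ} {C : ℝ} (hC : 0 ≤ C) (h : ∀ i, (|m i| : ℝ) ≤ C ^ (j i)) :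
    height n j m ≤ C := by
  refine height_le _ _ _ fun i => ?_
  have := Real.rpow_le_rpow (by positivity) (h i) (one_div_pos.mpr (hj i)).le
  rwa [← Real.rpow_mul hC, mul_one_div_cancel (hj i).ne', Real.rpow_one] at this

lemma height_double {n : ℕ} [Nonempty (Fin n)] {j : Fin n → ℝ} (hj : ∀ i, 0 < j i)
    (hj1 : ∀ i, j i ≤ 1) (m : Fin n → ℤ) :
    2 * height n j m ≤ height n j (m + m) := by
  have key : ∀ i : Fin n, 2 * (|m i| : ℝ) ^ (1 / j i) ≤ height n j (m + m) := by
    intro i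
    refine le_trans ?_ (height_term_le j (m+m) i)
    have h' : ((m+m) i : ℝ) = 2 * (m i : ℝ) := by push_cast [Pi.add_apply]; ring
    have hmm : (|(m+m) i| : ℝ) = 2 * (|m i| : ℝ) := by rw [h', abs_mul, abs_two]
    rw [hmm, Real.mul_rpow (by norm_num) (by positivity)]
    have h2 : (2:ℝ) ^ (1:ℝ) ≤ 2 ^ (1 / j i) := by
      apply Real.rpow_le_rpow_of_exponent_le (by norm_num)
      rw [le_one_div (by norm_num) (hj i)]
      simpa using hj1 i
    rw [Real.rpow_one] at h2
    exact mul_le_mul_of_nonneg_right h2 (Real.rpow_nonneg (by positivity) _)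
  have h1 : height n j m ≤ height n j (m + m) / 2 := by
    refine height_le _ _ _ fun i => ?_
    have := key i
    linarith
  linarith

lemma window (b x : ℝ) (hb : 1 < b) (hx : 1 ≤ x) :
    b ^ (⌊Real.logb b x⌋₊ : ℝ) ≤ x ∧ x < b ^ ((⌊Real.logb b x⌋₊ : ℝ) + 1) := by
  have hb0 : 0 < b := lt_trans one_pos hb
  have hx0 : 0 < x := lt_of_lt_of_le one_pos hx
  have hl0 : 0 ≤ Real.logb b x := Real.logb_nonneg hb hx
  have h1 : (⌊Real.logb b x⌋₊ : ℝ) ≤ Real.logb b x := Nat.floor_le hl0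
  have h2 : Real.logb b x < (⌊Real.logb b x⌋₊ : ℝ) + 1 := Nat.lt_floor_add_one _
  constructor
  · calc b ^ (⌊Real.logb b x⌋₊ : ℝ) ≤ b ^ Real.logb b x :=
        Real.rpow_le_rpow_of_exponent_le (le_of_lt hb) h1
    _ = x := Real.rpow_logb hb0 (ne_of_gt hb) hx0
  · calc x = b ^ Real.logb b x := (Real.rpow_logb hb0 (ne_of_gt hb) hx0).symm
    _ < b ^ ((⌊Real.logb b x⌋₊ : ℝ) + 1) :=
        Real.rpow_lt_rpow_of_exponent_lt hb h2

lemma logb_32_le (R : ℝ) (hR : 1 < R) : Real.logb (3/2) R ≤ 2 * Real.logb 2 R := by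
  have hlogR : 0 < Real.log R := Real.log_pos hR
  have h32 : 0 < Real.log (3/2) := Real.log_pos (by norm_num)
  have h2 : 0 < Real.log 2 := Real.log_pos one_lt_two
  have key : Real.log 2 ≤ 2 * Real.log (3/2) := by
    have h : Real.log (((3:ℝ)/2)^(2:ℕ)) = 2 * Real.log (3/2) := by
      rw [Real.log_pow]; push_cast; ring
    rw [← h]
    apply Real.log_le_log (by norm_num)
    norm_num
  rw [Real.logb, Real.logb, div_le_iff₀ h32]
  have h3 : Real.log R / Real.log 2 * Real.log 2 = Real.log R := div_mul_cancel₀ _ h2.ne'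
  nlinarith [mul_le_mul_of_nonneg_left key (div_nonneg hlogR.le h2.le)]

lemma floor_class_bound (a b Bv : ℝ) (hB : 0 < Bv) (ha : |a| < Bv) (hb : |b| < Bv)
    (h : (⌊3 * (a + Bv) / (2 * Bv)⌋).toNat % 3 = (⌊3 * (b + Bv) / (2 * Bv)⌋).toNat % 3) :
    |a - b| < (2/3) * Bv := by
  obtain ⟨ha1, ha2⟩ := abs_lt.mp ha
  obtain ⟨hb1, hb2⟩ := abs_lt.mp hb
  set u := 3 * (a + Bv) / (2 * Bv) with hu
  set u' := 3 * (b + Bv) / (2 * Bv) with hu'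
  have hu0 : 0 ≤ u := by rw [hu]; apply div_nonneg _ (by linarith); linarith
  have hu0' : 0 ≤ u' := by rw [hu']; apply div_nonneg _ (by linarith); linarith
  have hu3 : u < 3 := by rw [hu, div_lt_iff₀ (by linarith)]; linarith
  have hu3' : u' < 3 := by rw [hu', div_lt_iff₀ (by linarith)]; linarith
  have hfl0 : 0 ≤ ⌊u⌋ := Int.floor_nonneg.mpr hu0
  have hfl0' : 0 ≤ ⌊u'⌋ := Int.floor_nonneg.mpr hu0'
  have hfl3 : ⌊u⌋ < 3 := Int.floor_lt.mpr (by exact_mod_cast hu3)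
  have hfl3' : ⌊u'⌋ < 3 := Int.floor_lt.mpr (by exact_mod_cast hu3')
  have hfleq : ⌊u⌋ = ⌊u'⌋ := by omega
  have hd1 : |u - u'| < 1 := by
    have l1 := Int.floor_le u
    have l2 := Int.lt_floor_add_one u
    have l1' := Int.floor_le u'
    have l2' := Int.lt_floor_add_one u'
    rw [hfleq] at l1 l2
    rw [abs_lt]; constructor <;> linarith
  have hd2 : u - u' = 3 * (a - b) / (2 * Bv) := by rw [hu, hu']; ring
  rw [hd2, abs_div, abs_of_pos (by linarith : (0:ℝ) < 2 * Bv),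
    div_lt_one (by linarith)] at hd1
  have h3 : |3 * (a - b)| = 3 * |a - b| := by rw [abs_mul]; norm_num
  rw [h3] at hd1
  linarith

end Stmt13Aux

open Stmt13Aux in
theorem statement13 (n : ℕ) (hn : 1 ≤ n) (θ j : Fin n → ℝ)
    (hj : ∀ i, 0 < j i) (hsum : ∑ i, j i = 1) (hθ : ZLinIndep n θ) :
    ∀ R > (1 : ℝ), ∀ T > (0 : ℝ),
      {m : Fin n → ℤ | IsBestApprox n j θ m ∧
          T ≤ height n j m ∧ height n j m < R * T}.Finite ∧
      ({m : Fin n → ℤ | IsBestApprox n j θ m ∧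
          T ≤ height n j m ∧ height n j m < R * T}.ncard : ℝ) ≤
        4 * 3 ^ n * (1 + Real.logb 2 R) := by
  classical
  intro R hR T hT
  haveI : Nonempty (Fin n) := Fin.pos_iff_nonempty.mp hn
  have hj1 : ∀ i, j i ≤ 1 := by
    intro i
    calc j i ≤ ∑ i', j i' := Finset.single_le_sum (fun i' _ => (hj i').le) (Finset.mem_univ i)
    _ = 1 := hsum
  set s := {m : Fin n → ℤ | IsBestApprox n j θ m ∧
      T ≤ height n j m ∧ height n j m < R * T} with hs
  set K : ℕ := ⌈Real.logb (3/2) R⌉₊ with hKdef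
  have hK0 : 0 < K := Nat.ceil_pos.mpr (Real.logb_pos (by norm_num) hR)
  set k : (Fin n → ℤ) → ℕ := fun m => ⌊Real.logb (3/2) (height n j m / T)⌋₊ with hk
  set c : (Fin n → ℤ) → Fin n → Fin 3 := fun m i =>
    ⟨(⌊3 * ((m i : ℝ) + (T * (3/2) ^ (k m + 1)) ^ (j i)) /
        (2 * (T * (3/2) ^ (k m + 1)) ^ (j i))⌋).toNat % 3, Nat.mod_lt _ (by norm_num)⟩ with hc
  set δ : (Fin n → ℤ) → ℝ := fun m =>
    (∑ i, (m i : ℝ) * θ i) - round (∑ i, (m i : ℝ) * θ i) with hδ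
  set f : (Fin n → ℤ) → Fin K × (Fin n → Fin 3) × Bool := fun m =>
    (⟨k m % K, Nat.mod_lt _ hK0⟩, c m, decide (0 ≤ δ m)) with hf
  -- window bounds
  have hwin : ∀ m ∈ s, T * (3/2:ℝ)^(k m) ≤ height n j m ∧
      height n j m < T * (3/2:ℝ)^(k m + 1) := by
    intro m hm
    obtain ⟨-, hmT, -⟩ := hm
    have hx1 : 1 ≤ height n j m / T := (one_le_div hT).mpr hmT
    have hw := window (3/2) (height n j m / T) (by norm_num) hx1
    have he : height n j m = T * (height n j m / T) := by field_simp
    constructor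
    · have h1 := hw.1
      rw [Real.rpow_natCast] at h1
      calc T * (3/2:ℝ)^(k m) ≤ T * (height n j m / T) :=
            mul_le_mul_of_nonneg_left h1 hT.le
        _ = height n j m := he.symm
    · have h1 := hw.2
      have hcast : ((⌊Real.logb (3/2) (height n j m / T)⌋₊ : ℝ) + 1)
          = ((k m + 1 : ℕ) : ℝ) := by rw [hk]; push_cast; ring
      rw [hcast, Real.rpow_natCast] at h1
      calc height n j m = T * (height n j m / T) := he
        _ < T * (3/2:ℝ)^(k m + 1) := mul_lt_mul_of_pos_left h1 hT
  have hkK : ∀ m ∈ s, k m < K := by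
    intro m hm
    obtain ⟨-, hmT, hmRT⟩ := hm
    have h1 : height n j m / T < R := (div_lt_iff₀ hT).mpr hmRT
    have h2 : Real.logb (3/2) (height n j m / T) < Real.logb (3/2) R :=
      Real.logb_lt_logb (by norm_num) (div_pos (lt_of_lt_of_le hT hmT) hT) h1
    have h3 : (k m : ℝ) ≤ Real.logb (3/2) (height n j m / T) :=
      Nat.floor_le (Real.logb_nonneg (by norm_num) ((one_le_div hT).mpr hmT))
    exact Nat.lt_ceil.mpr (lt_of_le_of_lt h3 h2)
  -- key injectivity step
  have key : ∀ m ∈ s, ∀ m' ∈ s, f m = f m' →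
      nearInt (∑ i, (m' i : ℝ) * θ i) ≤ nearInt (∑ i, (m i : ℝ) * θ i) → m = m' := by
    intro m hm m' hm' hfe hle
    by_contra hne
    have hwm := hwin m hm
    have hwm' := hwin m' hm'
    have hkmK := hkK m hm
    have hkmK' := hkK m' hm'
    obtain ⟨hbest, hmT, hmRT⟩ := hm
    obtain ⟨hbest', hmT', hmRT'⟩ := hm'
    simp only [hf, Prod.mk.injEq, Fin.mk.injEq] at hfe
    obtain ⟨hk1, hcc, hsg⟩ := hfe
    rw [Nat.mod_eq_of_lt hkmK, Nat.mod_eq_of_lt hkmK'] at hk1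
    have hsgn : (0 ≤ δ m) ↔ (0 ≤ δ m') := decide_eq_decide.mp hsg
    -- windows
    rw [← hk1] at hwm'
    set S1 := T * (3/2:ℝ)^(k m) with hS1
    set S2 := T * (3/2:ℝ)^(k m + 1) with hS2
    have hS1pos : 0 < S1 := by rw [hS1]; positivity
    have hS2pos : 0 < S2 := by rw [hS2]; positivity
    have hS21 : S2 = (3/2) * S1 := by rw [hS1, hS2, pow_succ]; ring
    -- abs bounds
    have habs : ∀ i, |(m i : ℝ)| < S2 ^ (j i) :=
      fun i => abs_lt_of_height_lt hj hS2pos hwm.2 i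
    have habs' : ∀ i, |(m' i : ℝ)| < S2 ^ (j i) :=
      fun i => abs_lt_of_height_lt hj hS2pos hwm'.2 i
    -- class bound
    have hdiff : ∀ i, |(m i : ℝ) - (m' i : ℝ)| < (2/3) * S2 ^ (j i) := by
      intro i
      have hci := congrFun hcc i
      simp only [hc, Fin.mk.injEq] at hci
      rw [← hk1, ← hS2] at hci
      exact floor_class_bound _ _ _ (Real.rpow_pos_of_pos hS2pos _) (habs i) (habs' i) hci
    -- the difference vector
    set v : Fin n → ℤ := m - m' with hv
    have hv0 : v ≠ 0 := sub_ne_zero.mpr hne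
    have hvcast : ∀ i, ((v i : ℤ) : ℝ) = (m i : ℝ) - (m' i : ℝ) := by
      intro i; rw [hv]; push_cast [Pi.sub_apply]; ring
    have hvh : height n j v ≤ S1 := by
      apply height_le_of_abs_le hj hS1pos.le
      intro i
      have h1 := hdiff i
      have h2 : (2/3 : ℝ) * S2 ^ (j i) ≤ S1 ^ (j i) := by
        have he : S1 ^ (j i) = (2/3 : ℝ)^(j i) * S2 ^ (j i) := by
          rw [← Real.mul_rpow (by norm_num) hS2pos.le]
          congr 1
          rw [hS21]; ring
        rw [he]
        have h23 : (2/3:ℝ) ≤ (2/3:ℝ) ^ (j i) := by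
          have h' := Real.rpow_le_rpow_of_exponent_ge
            (by norm_num : (0:ℝ) < 2/3) (by norm_num) (hj1 i)
          rwa [Real.rpow_one] at h'
        have hBpos : 0 < S2 ^ (j i) := Real.rpow_pos_of_pos hS2pos _
        nlinarith
      rw [hvcast i]
      linarith
    -- v ≠ m, v ≠ -m
    have hvm : v ≠ m := by
      intro h
      exact hbest'.1 (sub_eq_self.mp h)
    have hvnm : v ≠ -m := by
      intro h
      have hm2 : m' = m + m := by
        funext i
        have hi := congrFun h i
        simp only [hv, Pi.sub_apply, Pi.neg_apply] at hi
        simp only [Pi.add_apply]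
        omega
      have h2h := height_double hj hj1 m
      rw [← hm2] at h2h
      linarith [hwm.1, hwm'.2, hS1pos, hS21, h2h]
    have hlt := hbest.2 v hv0 hvm hvnm (le_trans hvh hwm.1)
    -- bound nearInt of v
    have hsum_v : (∑ i, (v i : ℝ) * θ i)
        = (∑ i, (m i : ℝ) * θ i) - (∑ i, (m' i : ℝ) * θ i) := by
      rw [← Finset.sum_sub_distrib]
      apply Finset.sum_congr rfl
      intro i _
      rw [hvcast i]; ring
    have hni : nearInt (∑ i, (v i : ℝ) * θ i) ≤ |δ m - δ m'| := by
      calc nearInt (∑ i, (v i : ℝ) * θ i)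
          = |(∑ i, (v i : ℝ) * θ i) - round (∑ i, (v i : ℝ) * θ i)| := rfl
        _ ≤ |(∑ i, (v i : ℝ) * θ i) -
            ((round (∑ i, (m i : ℝ) * θ i) - round (∑ i, (m' i : ℝ) * θ i) : ℤ) : ℝ)| :=
            round_le _ _
        _ = |δ m - δ m'| := by rw [hsum_v, hδ]; push_cast; ring_nf
    -- sign argument
    have hled : |δ m'| ≤ |δ m| := by simpa only [nearInt, hδ] using hle
    have habs2 : |δ m - δ m'| ≤ |δ m| := by
      by_cases h0 : 0 ≤ δ m
      · have h0' : 0 ≤ δ m' := hsgn.mp h0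
        rw [abs_of_nonneg h0] at hled ⊢
        rw [abs_of_nonneg h0'] at hled
        rw [abs_le]; constructor <;> linarith
      · have h0' : ¬ 0 ≤ δ m' := fun hh => h0 (hsgn.mpr hh)
        push_neg at h0 h0'
        rw [abs_of_neg h0] at hled ⊢
        rw [abs_of_neg h0'] at hled
        rw [abs_le]; constructor <;> linarith
    have hfin : nearInt (∑ i, (m i : ℝ) * θ i) < |δ m| :=
      lt_of_lt_of_le hlt (le_trans hni habs2)
    have hrfl : nearInt (∑ i, (m i : ℝ) * θ i) = |δ m| := by simp only [nearInt, hδ]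
    rw [hrfl] at hfin
    exact lt_irrefl _ hfin
  -- injectivity
  have hinj : Set.InjOn f s := by
    intro m hm m' hm' hfe
    rcases le_total (nearInt (∑ i, (m' i : ℝ) * θ i)) (nearInt (∑ i, (m i : ℝ) * θ i)) with h | h
    · exact key m hm m' hm' hfe h
    · exact (key m' hm' m hm hfe.symm h).symm
  have hfin : s.Finite := Set.Finite.of_finite_image (Set.toFinite _) hinj
  refine ⟨hfin, ?_⟩
  have hcard : s.ncard ≤ K * (3 ^ n * 2) := by
    have h1 : s.ncard = (f '' s).ncard := (Set.ncard_image_of_injOn hinj).symm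
    have h2 : (f '' s).ncard ≤ (Set.univ : Set (Fin K × (Fin n → Fin 3) × Bool)).ncard :=
      Set.ncard_le_ncard (Set.subset_univ _) Set.finite_univ
    rw [Set.ncard_univ, Nat.card_eq_fintype_card] at h2
    simp only [Fintype.card_prod, Fintype.card_fin, Fintype.card_bool, Fintype.card_fun] at h2
    omega
  have hlogpos : 0 < Real.logb 2 R := Real.logb_pos one_lt_two hR
  have hKle : (K : ℝ) ≤ 2 * Real.logb 2 R + 1 := by
    have h1 : (K : ℝ) < Real.logb (3/2) R + 1 := by
      rw [hKdef]
      exact Nat.ceil_lt_add_one (Real.logb_nonneg (by norm_num) hR.le)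
    have h2 := logb_32_le R hR
    linarith
  have h3pos : (0:ℝ) < 3 ^ n := by positivity
  calc (s.ncard : ℝ) ≤ ((K * (3 ^ n * 2) : ℕ) : ℝ) := by exact_mod_cast hcard
    _ ≤ 4 * 3 ^ n * (1 + Real.logb 2 R) := by
      push_cast
      nlinarith [hKle, h3pos, hlogpos]
end

section
/- Let θ = (θ₁,…,θₙ) ∈ ℝⁿ be such that 1, θ₁, …, θₙ are linearly independent over ℤ. Let j_min = min(j₁,…,jₙ), j_max = max(j₁,…,jₙ), let R > 4^{1/j_min} be real, let 0 < ε < 1/(2R^{2 j_max}), let k ≥ 1 be an integer, and let m be a best approximation to θ (with respect to the weights j₁,…,jₙ) with R^{k−1} ≤ M_m < R^{k}. Let H ⊂ [0,1]ⁿ be a closed axis-parallel box whose side length in the i-th coordinate direction is R^{−k jᵢ} for each i. Then the number of integers p ∈ ℤ such that there exists x ∈ H with |m·x + p| < ε is at most 2ⁿ·n. -/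
open scoped BigOperators

private lemma minmax_aux (c t d : ℝ) (h0 : 0 ≤ t) (h1 : t ≤ d) :
    min 0 (c*d) ≤ c*t ∧ c*t ≤ max 0 (c*d) := by
  rcases le_total 0 c with h|h
  · exact ⟨le_trans (min_le_left _ _) (by positivity),
      le_trans (by nlinarith) (le_max_right _ _)⟩
  · exact ⟨le_trans (min_le_right _ _) (by nlinarith),
      le_trans (by nlinarith) (le_max_left _ _)⟩

theorem statement14 (n : ℕ) (hn : 1 ≤ n) (θ j : Fin n → ℝ)
    (hj : ∀ i, 0 < j i) (hsum : ∑ i, j i = 1) (hθ : ZLinIndep n θ)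
    (R ε : ℝ) (hR : (4 : ℝ) ^ (1 / ⨅ i, j i) < R)
    (hε0 : 0 < ε) (hε : ε < 1 / (2 * R ^ (2 * ⨆ i, j i)))
    (k : ℕ) (hk : 1 ≤ k)
    (m : Fin n → ℤ) (hm : IsBestApprox n j θ m)
    (hM1 : R ^ ((k : ℝ) - 1) ≤ height n j m) (hM2 : height n j m < R ^ (k : ℝ))
    (a : Fin n → ℝ) (ha : ∀ i, 0 ≤ a i ∧ a i + R ^ (-(k : ℝ) * j i) ≤ 1) :
    {p : ℤ | ∃ x : Fin n → ℝ,
        (∀ i, x i ∈ Set.Icc (a i) (a i + R ^ (-(k : ℝ) * j i))) ∧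
        |(∑ i, (m i : ℝ) * x i) + (p : ℝ)| < ε}.Finite ∧
      {p : ℤ | ∃ x : Fin n → ℝ,
        (∀ i, x i ∈ Set.Icc (a i) (a i + R ^ (-(k : ℝ) * j i))) ∧
        |(∑ i, (m i : ℝ) * x i) + (p : ℝ)| < ε}.ncard ≤ 2 ^ n * n := by
  haveI : Nonempty (Fin n) := ⟨⟨0, hn⟩⟩
  have hjinf : 0 < ⨅ i, j i := by
    obtain ⟨i₀, hi₀⟩ := exists_eq_ciInf_of_finite (f := j)
    rw [← hi₀]; exact hj i₀
  have hR1 : (1:ℝ) < R := by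
    refine lt_trans ?_ hR
    exact (Real.one_lt_rpow_iff_of_pos (by norm_num)).2 (Or.inl ⟨by norm_num, by positivity⟩)
  have hR0 : (0:ℝ) < R := lt_trans one_pos hR1
  have hsup0 : 0 ≤ 2 * ⨆ i, j i := by
    have := le_ciSup (Set.Finite.bddAbove (Set.finite_range j)) (Classical.arbitrary (Fin n))
    nlinarith [hj (Classical.arbitrary (Fin n))]
  have hRe1 : (1:ℝ) ≤ R ^ (2 * ⨆ i, j i) := Real.one_le_rpow hR1.le hsup0
  have hεhalf : ε < 1/2 := by
    refine lt_of_lt_of_le hε ?_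
    rw [div_le_div_iff₀ (by nlinarith) (by norm_num)]
    nlinarith
  set δ : Fin n → ℝ := fun i => R ^ (-(k : ℝ) * j i) with hδdef
  have hδpos : ∀ i, 0 < δ i := fun i => Real.rpow_pos_of_pos hR0 _
  -- each |m i| * δ i < 1
  have hkey : ∀ i, (|m i| : ℝ) * δ i < 1 := by
    intro i
    have h1 : (|m i| : ℝ) ^ (1 / j i) ≤ height n j m := by
      unfold height
      exact le_ciSup (f := fun i => (|m i| : ℝ) ^ (1 / j i))
        (Set.Finite.bddAbove (Set.finite_range _)) i
    have h2 : (|m i| : ℝ) ^ (1 / j i) < R ^ (k : ℝ) := lt_of_le_of_lt h1 hM2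
    have h3 : ((|m i| : ℝ) ^ (1 / j i)) ^ (j i) < (R ^ (k : ℝ)) ^ (j i) :=
      Real.rpow_lt_rpow (Real.rpow_nonneg (by positivity) _) h2 (hj i)
    have h4 : ((|m i| : ℝ) ^ (1 / j i)) ^ (j i) = (|m i| : ℝ) := by
      rw [← Real.rpow_mul (by positivity), one_div_mul_cancel (hj i).ne', Real.rpow_one]
    have h5 : (R ^ (k : ℝ)) ^ (j i) = R ^ ((k : ℝ) * j i) := by
      rw [← Real.rpow_mul hR0.le]
    rw [h4, h5] at h3
    have h6 : (|m i| : ℝ) * δ i < R ^ ((k : ℝ) * j i) * δ i :=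
      mul_lt_mul_of_pos_right h3 (hδpos i)
    have h7 : R ^ ((k : ℝ) * j i) * δ i = 1 := by
      rw [hδdef, ← Real.rpow_add hR0]
      ring_nf
      exact Real.rpow_zero R
    linarith [h6, h7.le, h7.ge]
  have hL : ∑ i, (|m i| : ℝ) * δ i < n := by
    calc ∑ i, (|m i| : ℝ) * δ i < ∑ _i : Fin n, (1:ℝ) :=
          Finset.sum_lt_sum_of_nonempty Finset.univ_nonempty (fun i _ => hkey i)
      _ = n := by simp
  -- set up the interval
  set lo : ℝ := ∑ i, min 0 ((m i : ℝ) * δ i) with hlo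
  set hi : ℝ := ∑ i, max 0 ((m i : ℝ) * δ i) with hhi
  have hdiff : hi - lo = ∑ i, (|m i| : ℝ) * δ i := by
    rw [hhi, hlo, ← Finset.sum_sub_distrib]
    refine Finset.sum_congr rfl (fun i _ => ?_)
    rw [max_sub_min_eq_abs, sub_zero, abs_mul, abs_of_pos (hδpos i)]
  set c : ℝ := -(∑ i, (m i : ℝ) * a i) - hi - ε with hc
  -- every member p satisfies c < p < c + n + 1
  have hmem : ∀ p : ℤ, p ∈ {p : ℤ | ∃ x : Fin n → ℝ,
        (∀ i, x i ∈ Set.Icc (a i) (a i + R ^ (-(k : ℝ) * j i))) ∧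
        |(∑ i, (m i : ℝ) * x i) + (p : ℝ)| < ε} →
      c < (p : ℝ) ∧ (p : ℝ) < c + n + 1 := by
    intro p hp
    obtain ⟨x, hx, habs⟩ := hp
    rw [abs_lt] at habs
    have hsplit : (∑ i, (m i : ℝ) * x i)
        = (∑ i, (m i : ℝ) * a i) + ∑ i, (m i : ℝ) * (x i - a i) := by
      rw [← Finset.sum_add_distrib]
      refine Finset.sum_congr rfl (fun i _ => by ring)
    have hlow : lo ≤ ∑ i, (m i : ℝ) * (x i - a i) := by
      refine Finset.sum_le_sum (fun i _ => ?_)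
      exact (minmax_aux _ _ _ (by linarith [(hx i).1]) (by linarith [(hx i).2])).1
    have hhigh : ∑ i, (m i : ℝ) * (x i - a i) ≤ hi := by
      refine Finset.sum_le_sum (fun i _ => ?_)
      exact (minmax_aux _ _ _ (by linarith [(hx i).1]) (by linarith [(hx i).2])).2
    constructor
    · rw [hc]
      have := habs.1
      nlinarith [hsplit, hhigh]
    · rw [hc]
      have := habs.2
      have h2ε : 2 * ε < 1 := by linarith
      have := hdiff
      nlinarith [hsplit, hlow, hL]
  have hsub : {p : ℤ | ∃ x : Fin n → ℝ,
        (∀ i, x i ∈ Set.Icc (a i) (a i + R ^ (-(k : ℝ) * j i))) ∧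
        |(∑ i, (m i : ℝ) * x i) + (p : ℝ)| < ε}
      ⊆ ↑(Finset.Icc (⌊c⌋ + 1) (⌊c⌋ + 1 + n)) := by
    intro p hp
    obtain ⟨h1, h2⟩ := hmem p hp
    simp only [Finset.coe_Icc, Set.mem_Icc]
    constructor
    · exact Int.add_one_le_iff.mpr (Int.floor_lt.mpr h1)
    · have hcf : c < (⌊c⌋ : ℝ) + 1 := Int.lt_floor_add_one c
      have : (p : ℝ) < ((⌊c⌋ + 1 + (n : ℤ) : ℤ) : ℝ) + 1 := by push_cast; linarith
      have := Int.lt_add_one_iff.mp (by exact_mod_cast this)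
      exact_mod_cast this
  have hfin : {p : ℤ | ∃ x : Fin n → ℝ,
        (∀ i, x i ∈ Set.Icc (a i) (a i + R ^ (-(k : ℝ) * j i))) ∧
        |(∑ i, (m i : ℝ) * x i) + (p : ℝ)| < ε}.Finite :=
    Set.Finite.subset (Finset.Icc (⌊c⌋ + 1) (⌊c⌋ + 1 + n)).finite_toSet hsub
  refine ⟨hfin, ?_⟩
  have hcard : (Finset.Icc (⌊c⌋ + 1) (⌊c⌋ + 1 + n)).card = n + 1 := by
    rw [Int.card_Icc]
    simp [add_comm]
    omega
  calc {p : ℤ | ∃ x : Fin n → ℝ,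
        (∀ i, x i ∈ Set.Icc (a i) (a i + R ^ (-(k : ℝ) * j i))) ∧
        |(∑ i, (m i : ℝ) * x i) + (p : ℝ)| < ε}.ncard
      ≤ (↑(Finset.Icc (⌊c⌋ + 1) (⌊c⌋ + 1 + n)) : Set ℤ).ncard :=
        Set.ncard_le_ncard hsub (Finset.Icc _ _).finite_toSet
    _ = n + 1 := by rw [Set.ncard_coe_finset, hcard]
    _ ≤ 2 ^ n * n := by
        have h2 : 2 ≤ 2 ^ n := by
          calc 2 = 2^1 := rfl
            _ ≤ 2^n := Nat.pow_le_pow_right (by norm_num) hn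
        nlinarith
end

section
/- Let j_min = min(j₁,…,jₙ) and j_max = max(j₁,…,jₙ), let R > 4^{1/j_min} be real, let 0 < ε < 1/(2R^{2 j_max}), let k ≥ 1 be an integer and fix i ∈ {1,…,n}. Let I ⊂ ℝ be a closed interval of length R^{−k jᵢ}. Then the set of rational numbers r for which there exist a positive integer q with R^{(k−1) jᵢ/2} ≤ q < R^{k jᵢ/2} and an integer p with r = p/q such that some x ∈ I satisfies q·|qx − p| < ε, has at most two elements. -/
open scoped BigOperators

theorem two_of_no_three (S : Set ℚ)
    (h3 : ∀ x ∈ S, ∀ y ∈ S, ∀ z ∈ S, x ≠ y → x ≠ z → y ≠ z → False) :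
    S.Finite ∧ S.ncard ≤ 2 := by
  rcases Set.eq_empty_or_nonempty S with hSe | ⟨r0, hr0⟩
  · rw [hSe]; simp
  by_cases hone : ∀ r ∈ S, r = r0
  · have hsub : S ⊆ {r0} := fun r hr => hone r hr
    exact ⟨(Set.finite_singleton r0).subset hsub,
      le_trans (Set.ncard_le_ncard hsub (Set.finite_singleton r0)) (by simp)⟩
  · push_neg at hone
    obtain ⟨r1, hr1, hne⟩ := hone
    have hsub : S ⊆ {r0, r1} := by
      intro r hr
      by_contra h
      simp only [Set.mem_insert_iff, Set.mem_singleton_iff] at h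
      push_neg at h
      exact h3 r0 hr0 r1 hr1 r hr hne.symm (Ne.symm h.1) (Ne.symm h.2)
    have hfin : ({r0, r1} : Set ℚ).Finite := (Set.finite_singleton r1).insert r0
    refine ⟨hfin.subset hsub, le_trans (Set.ncard_le_ncard hsub hfin) ?_⟩
    exact le_trans (Set.ncard_insert_le _ _) (by simp)

theorem statement15 (n : ℕ) (hn : 1 ≤ n) (j : Fin n → ℝ)
    (hj : ∀ i', 0 < j i') (hsum : ∑ i', j i' = 1)
    (R ε : ℝ) (hR : (4 : ℝ) ^ (1 / ⨅ i', j i') < R)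
    (hε0 : 0 < ε) (hε : ε < 1 / (2 * R ^ (2 * ⨆ i', j i')))
    (k : ℕ) (hk : 1 ≤ k) (i : Fin n) (a : ℝ) :
    {r : ℚ | ∃ q : ℕ, 0 < q ∧ R ^ (((k : ℝ) - 1) * j i / 2) ≤ (q : ℝ) ∧
        (q : ℝ) < R ^ ((k : ℝ) * j i / 2) ∧ ∃ p : ℤ, (r : ℝ) = (p : ℝ) / (q : ℝ) ∧
        ∃ x ∈ Set.Icc a (a + R ^ (-(k : ℝ) * j i)),
          (q : ℝ) * |(q : ℝ) * x - (p : ℝ)| < ε}.Finite ∧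
      {r : ℚ | ∃ q : ℕ, 0 < q ∧ R ^ (((k : ℝ) - 1) * j i / 2) ≤ (q : ℝ) ∧
        (q : ℝ) < R ^ ((k : ℝ) * j i / 2) ∧ ∃ p : ℤ, (r : ℝ) = (p : ℝ) / (q : ℝ) ∧
        ∃ x ∈ Set.Icc a (a + R ^ (-(k : ℝ) * j i)),
          (q : ℝ) * |(q : ℝ) * x - (p : ℝ)| < ε}.ncard ≤ 2 := by
  have hJ : 0 < j i := hj i
  have hjmin : 0 < ⨅ i', j i' := by
    have hne : Nonempty (Fin n) := ⟨⟨0, hn⟩⟩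
    obtain ⟨i₀, hi₀⟩ := Finite.exists_min j
    have heq : ⨅ i', j i' = j i₀ := le_antisymm
      (ciInf_le (Finite.bddBelow_range j) i₀) (le_ciInf hi₀)
    rw [heq]; exact hj i₀
  have hR1 : 1 < R := by
    refine lt_trans ?_ hR
    rw [show (1:ℝ) = (4:ℝ) ^ (0:ℝ) by simp]
    exact Real.rpow_lt_rpow_of_exponent_lt (by norm_num) (by positivity)
  have hR0 : 0 < R := lt_trans one_pos hR1
  have hJmax : j i ≤ ⨆ i', j i' := le_ciSup (Finite.bddAbove_range j) i
  have hεJ : ε < R ^ (-(j i)) / 2 := by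
    have h1 : R ^ (j i) ≤ R ^ (2 * ⨆ i', j i') :=
      Real.rpow_le_rpow_of_exponent_le hR1.le (by nlinarith)
    have hp1 : (0:ℝ) < R ^ (j i) := Real.rpow_pos_of_pos hR0 _
    have h2 : (1:ℝ) / (2 * R ^ (2 * ⨆ i', j i')) ≤ 1 / (2 * R ^ (j i)) := by
      apply one_div_le_one_div_of_le (by positivity)
      nlinarith
    calc ε < 1 / (2 * R ^ (2 * ⨆ i', j i')) := hε
      _ ≤ 1 / (2 * R ^ (j i)) := h2
      _ = R ^ (-(j i)) / 2 := by
          rw [Real.rpow_neg hR0.le]; field_simp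
  set E := ε * R ^ (-((k:ℝ)-1) * j i) with hE
  set g := R ^ (-(k:ℝ) * j i) with hg
  have hgpos : 0 < g := Real.rpow_pos_of_pos hR0 _
  have hEpos : 0 < E := by
    have := Real.rpow_pos_of_pos hR0 (-((k:ℝ)-1) * j i)
    positivity
  have hEg : E < g / 2 := by
    have hpow : R ^ (-(j i)) * R ^ (-((k:ℝ)-1) * j i) = g := by
      rw [hg, ← Real.rpow_add hR0]; ring_nf
    have hposE : 0 < R ^ (-((k:ℝ)-1) * j i) := Real.rpow_pos_of_pos hR0 _
    calc E < (R ^ (-(j i)) / 2) * R ^ (-((k:ℝ)-1) * j i) :=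
          mul_lt_mul_of_pos_right hεJ hposE
      _ = g / 2 := by rw [div_mul_eq_mul_div, hpow]
  apply two_of_no_three
  intro x hx y hy z hz hxy hxz hyz
  simp only [Set.mem_setOf_eq] at hx hy hz
  -- location bound
  have hmem : ∀ r : ℚ, (∃ q : ℕ, 0 < q ∧ R ^ (((k : ℝ) - 1) * j i / 2) ≤ (q : ℝ) ∧
      (q : ℝ) < R ^ ((k : ℝ) * j i / 2) ∧ ∃ p : ℤ, (r : ℝ) = (p : ℝ) / (q : ℝ) ∧
      ∃ x ∈ Set.Icc a (a + R ^ (-(k : ℝ) * j i)),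
        (q : ℝ) * |(q : ℝ) * x - (p : ℝ)| < ε) →
      a - E ≤ (r:ℝ) ∧ (r:ℝ) ≤ a + g + E := by
    rintro r ⟨q, hq0, hqlb, hqub, p, hrp, t, ⟨ht1, ht2⟩, hlt⟩
    have hq0' : (0:ℝ) < q := Nat.cast_pos.mpr hq0
    have hqsq : R ^ (((k:ℝ)-1) * j i) ≤ (q:ℝ)^2 := by
      have : R ^ (((k:ℝ)-1) * j i) = (R ^ (((k:ℝ)-1) * j i / 2))^2 := by
        rw [← Real.rpow_natCast (R ^ (((k:ℝ)-1) * j i / 2)) 2,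
          ← Real.rpow_mul hR0.le]
        norm_num
      rw [this]
      exact pow_le_pow_left₀ (Real.rpow_pos_of_pos hR0 _).le hqlb 2
    have key : |t - (p:ℝ)/q| * (q:ℝ)^2 < ε := by
      have heq : t - (p:ℝ)/q = ((q:ℝ)*t - p)/q := by field_simp
      rw [heq, abs_div, abs_of_pos hq0']
      calc |(q:ℝ)*t - p| / q * (q:ℝ)^2 = q * |(q:ℝ)*t - p| := by
            field_simp
        _ < ε := hlt
    have hEq : |t - (p:ℝ)/q| < E := by
      have h1 : |t - (p:ℝ)/q| * R ^ (((k:ℝ)-1) * j i) ≤ |t - (p:ℝ)/q| * (q:ℝ)^2 :=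
        mul_le_mul_of_nonneg_left hqsq (abs_nonneg _)
      have h2 : |t - (p:ℝ)/q| * R ^ (((k:ℝ)-1) * j i) < ε := lt_of_le_of_lt h1 key
      have hp : 0 < R ^ (((k:ℝ)-1) * j i) := Real.rpow_pos_of_pos hR0 _
      rw [hE, neg_mul, Real.rpow_neg hR0.le, mul_comm ε,
        ← div_eq_inv_mul, lt_div_iff₀ hp]
      exact h2
    rw [hrp]
    have habs := abs_lt.mp hEq
    constructor <;> nlinarith [ht1, ht2, habs.1, habs.2, hgpos]
  -- gap bound
  have hgap : ∀ r s : ℚ, (∃ q : ℕ, 0 < q ∧ R ^ (((k : ℝ) - 1) * j i / 2) ≤ (q : ℝ) ∧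
      (q : ℝ) < R ^ ((k : ℝ) * j i / 2) ∧ ∃ p : ℤ, (r : ℝ) = (p : ℝ) / (q : ℝ) ∧
      ∃ x ∈ Set.Icc a (a + R ^ (-(k : ℝ) * j i)),
        (q : ℝ) * |(q : ℝ) * x - (p : ℝ)| < ε) →
      (∃ q : ℕ, 0 < q ∧ R ^ (((k : ℝ) - 1) * j i / 2) ≤ (q : ℝ) ∧
      (q : ℝ) < R ^ ((k : ℝ) * j i / 2) ∧ ∃ p : ℤ, (s : ℝ) = (p : ℝ) / (q : ℝ) ∧
      ∃ x ∈ Set.Icc a (a + R ^ (-(k : ℝ) * j i)),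
        (q : ℝ) * |(q : ℝ) * x - (p : ℝ)| < ε) →
      r ≠ s → g < |(r:ℝ) - (s:ℝ)| := by
    rintro r s ⟨q1, hq10, hq1lb, hq1ub, p1, hr1, -⟩ ⟨q2, hq20, hq2lb, hq2ub, p2, hs2, -⟩ hrs
    have hq1' : (0:ℝ) < q1 := Nat.cast_pos.mpr hq10
    have hq2' : (0:ℝ) < q2 := Nat.cast_pos.mpr hq20
    have hN : (p1 * (q2:ℤ) - p2 * (q1:ℤ) : ℤ) ≠ 0 := by
      intro h
      apply hrs
      have hreq : (r:ℝ) = (s:ℝ) := by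
        rw [hr1, hs2, div_eq_div_iff hq1'.ne' hq2'.ne']
        have := congrArg (Int.cast : ℤ → ℝ) h
        push_cast at this
        linarith
      exact_mod_cast hreq
    have h1 : (1:ℝ) ≤ |((p1 * (q2:ℤ) - p2 * (q1:ℤ) : ℤ) : ℝ)| := by
      rw [← Int.cast_abs]
      exact_mod_cast Int.one_le_abs hN
    have hdiff : (r:ℝ) - s = ((p1 * (q2:ℤ) - p2 * (q1:ℤ) : ℤ) : ℝ) / ((q1:ℝ)*q2) := by
      rw [hr1, hs2]
      push_cast
      field_simp
    rw [hdiff, abs_div, abs_of_pos (by positivity : (0:ℝ) < (q1:ℝ)*q2)]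
    have hq12 : (q1:ℝ) * q2 < R ^ ((k:ℝ) * j i) := by
      calc (q1:ℝ)*q2 < R ^ ((k:ℝ) * j i / 2) * R ^ ((k:ℝ) * j i / 2) :=
            mul_lt_mul'' hq1ub hq2ub hq1'.le hq2'.le
        _ = R ^ ((k:ℝ) * j i) := by rw [← Real.rpow_add hR0]; ring_nf
    calc g = 1 / R ^ ((k:ℝ) * j i) := by
          rw [hg, neg_mul, Real.rpow_neg hR0.le, one_div]
      _ < 1 / ((q1:ℝ)*q2) := one_div_lt_one_div_of_lt (by positivity) hq12
      _ ≤ |((p1 * (q2:ℤ) - p2 * (q1:ℤ) : ℤ) : ℝ)| / ((q1:ℝ)*q2) := by gcongr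
  -- three points impossible
  have haux : ∀ r s t : ℚ,
      (a - E ≤ (r:ℝ) ∧ (r:ℝ) ≤ a + g + E) → (a - E ≤ (t:ℝ) ∧ (t:ℝ) ≤ a + g + E) →
      r < s → s < t → g < |(r:ℝ) - (s:ℝ)| → g < |(s:ℝ) - (t:ℝ)| → False := by
    intro r s t hr ht hrs hst h1 h2
    have hc1 : (r:ℝ) < s := by exact_mod_cast hrs
    have hc2 : (s:ℝ) < t := by exact_mod_cast hst
    rw [abs_of_neg (by linarith)] at h1
    rw [abs_of_neg (by linarith)] at h2
    linarith [hr.1, ht.2]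
  rcases lt_trichotomy x y with h1 | h1 | h1
  · rcases lt_trichotomy y z with h2 | h2 | h2
    · exact haux x y z (hmem x hx) (hmem z hz) h1 h2 (hgap x y hx hy hxy) (hgap y z hy hz hyz)
    · exact hyz h2
    · rcases lt_trichotomy x z with h4 | h4 | h4
      · exact haux x z y (hmem x hx) (hmem y hy) h4 h2 (hgap x z hx hz hxz) (hgap z y hz hy (Ne.symm hyz))
      · exact hxz h4
      · exact haux z x y (hmem z hz) (hmem y hy) h4 h1 (hgap z x hz hx (Ne.symm hxz)) (hgap x y hx hy hxy)
  · exact hxy h1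
  · rcases lt_trichotomy x z with h2 | h2 | h2
    · exact haux y x z (hmem y hy) (hmem z hz) h1 h2 (hgap y x hy hx (Ne.symm hxy)) (hgap x z hx hz hxz)
    · exact hxz h2
    · rcases lt_trichotomy y z with h4 | h4 | h4
      · exact haux y z x (hmem y hy) (hmem x hx) h4 h2 (hgap y z hy hz hyz) (hgap z x hz hx (Ne.symm hxz))
      · exact hyz h4
      · exact haux z y x (hmem z hz) (hmem x hx) h4 h1 (hgap z y hz hy (Ne.symm hyz)) (hgap y x hy hx (Ne.symm hxy))
end
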